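/- Let p be a quantum model on a contextuality scenario H = (V,E): there exist a (finite-dimensional) Hilbert space ℋ, a density operator ρ, and projections P_v for v ∈ V with ∑_{v∈e} P_v = 1 for all e ∈ E and p(v) = tr(ρ P_v). Then the matrix M indexed by {1} ∪ V defined by M_{uv} = tr(ρ P_u P_v) — more precisely, M_{uv} = tr(√ρ P_u P_v √ρ) to ensure positive semidefiniteness — together with M_{1v} = p(v) and M_{11} = 1, is a Q₁ certificate for p; hence every quantum model is in Q₁. -/

import Mathlib

open scoped ComplexOrder
open scoped MatrixOrder

/-!
The certificate is the real part of the Gram matrix of the family `1, (P v)_v` for the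
semi-inner product `⟪X, Y⟫ = tr (Y ρ Xᴴ)` that `ρ ≥ 0` induces on matrices, so it is positive
semidefinite. Its linear constraints follow from `∑_{u ∈ e} P_u = 1` and from `P_u P_v = 0` for
distinct `u, v` in an edge; the latter holds because
`∑_{w ∈ e, w ≠ v} (P_w P_v)ᴴ (P_w P_v) = P_v (∑_{w ∈ e} P_w) P_v - P_v = 0`
is a sum of positive matrices.
-/

/-- Q₁ certificate for a probabilistic model `p` on the scenario `(V, E)`. -/
def Q1Cert {V : Type*} [Fintype V] [DecidableEq V] (E : Finset (Finset V))
    (p : V → ℝ) (M : Matrix (Option V) (Option V) ℝ) : Prop :=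
  M.PosSemidef ∧
  M none none = 1 ∧
  (∀ v : V, M none (some v) = p v) ∧
  (∀ v : V, M (some v) (some v) = p v) ∧
  (∀ e ∈ E, ∀ u ∈ e, ∀ v ∈ e, u ≠ v → M (some u) (some v) = 0) ∧
  (∀ e ∈ E, ∀ v : V, ∑ u ∈ e, M (some u) (some v) = p v)

open Matrix RCLike

theorem Matrix.posSemidef_map_re_gram {𝕜 E ι : Type*} [RCLike 𝕜] [SeminormedAddCommGroup E]
    [InnerProductSpace 𝕜 E] [Finite ι] (v : ι → E) :
    ((gram 𝕜 v).map re).PosSemidef := by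
  let := InnerProductSpace.rclikeToReal 𝕜 E
  exact posSemidef_gram ℝ v

theorem Matrix.PosSemidef.posSemidef_re_trace_mul_mul {𝕜 m ι : Type*} [RCLike 𝕜] [Fintype m]
    [Finite ι] {ρ : Matrix m m 𝕜} (hρ : ρ.PosSemidef) {X : ι → Matrix m m 𝕜}
    (hX : ∀ i, (X i).IsHermitian) :
    (of fun i j => re (ρ * X i * X j).trace).PosSemidef := by
  let := ρ.toMatrixSeminormedAddCommGroup hρ
  let := ρ.toMatrixInnerProductSpace hρ
  convert posSemidef_map_re_gram (𝕜 := 𝕜) X using 1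
  ext i j
  change _ = re (X j * ρ * (X i)ᴴ).trace
  rw [(hX i).eq, trace_mul_cycle, trace_mul_comm, ← mul_assoc, of_apply]

theorem Matrix.trace_sqrt_mul_mul_sqrt {𝕜 m : Type*} [RCLike 𝕜] [Fintype m] [DecidableEq m]
    {ρ : Matrix m m 𝕜} (hρ : ρ.PosSemidef) (X : Matrix m m 𝕜) :
    (CFC.sqrt ρ * X * CFC.sqrt ρ).trace = (ρ * X).trace := by
  rw [trace_mul_cycle, CFC.sqrt_mul_sqrt_self ρ hρ.nonneg]

theorem Matrix.mul_eq_zero_of_sum_eq_one_of_isStarProjection {𝕜 m ι : Type*} [RCLike 𝕜]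
    [Fintype m] [DecidableEq m] [DecidableEq ι] {P : ι → Matrix m m 𝕜}
    (hP : ∀ i, IsStarProjection (P i)) {s : Finset ι} (hs : ∑ i ∈ s, P i = 1) {i j : ι}
    (hi : i ∈ s) (hj : j ∈ s) (hij : i ≠ j) :
    P i * P j = 0 := by
  have hterm : ∀ k, star (P k * P j) * (P k * P j) = P j * P k * P j := fun k => by
    rw [star_mul, (hP k).isSelfAdjoint.star_eq, (hP j).isSelfAdjoint.star_eq, mul_assoc,
      ← mul_assoc (P k), (hP k).isIdempotentElem.eq, mul_assoc]
  have hsum : ∑ k ∈ s.erase j, star (P k * P j) * (P k * P j) = 0 := by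
    have h : ∑ k ∈ s, P j * P k * P j = P j := by
      rw [← Finset.sum_mul, ← Finset.mul_sum, hs, mul_one, (hP j).isIdempotentElem.eq]
    rw [← Finset.sum_erase_add s _ hj, (hP j).isIdempotentElem.eq, (hP j).isIdempotentElem.eq,
      add_eq_right] at h
    simpa only [hterm] using h
  rw [Finset.sum_eq_zero_iff_of_nonneg fun k _ => star_mul_self_nonneg _] at hsum
  exact conjTranspose_mul_self_eq_zero.mp (hsum i (Finset.mem_erase.mpr ⟨hij, hi⟩))

/-- Every quantum model (projections `P_v` summing to the identity over each edge,
probabilities `p(v) = tr(ρ P_v)` for a density matrix `ρ`) admits a Q₁ certificate,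
namely `Mᵤᵥ = Re tr(√ρ P_u P_v √ρ)`, `M₁ᵥ = p(v)`, `M₁₁ = 1`.
Hence every quantum model is in Q₁. -/
theorem quantum_model_mem_Q1 {V : Type*} [Fintype V] [DecidableEq V]
    (E : Finset (Finset V)) (p : V → ℝ) (n : ℕ)
    (ρ : Matrix (Fin n) (Fin n) ℂ) (hρ : ρ.PosSemidef) (hρtr : ρ.trace = 1)
    (P : V → Matrix (Fin n) (Fin n) ℂ)
    (hherm : ∀ v, (P v).IsHermitian)
    (hproj : ∀ v, P v * P v = P v)
    (hsum : ∀ e ∈ E, ∑ v ∈ e, P v = 1)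
    (hp : ∀ v, (ρ * P v).trace = (p v : ℂ)) :
    Q1Cert E p
      (Matrix.of fun i j : Option V =>
        match i, j with
        | none, none => 1
        | none, some v => p v
        | some u, none => p u
        | some u, some v => ((CFC.sqrt ρ * P u * P v * CFC.sqrt ρ).trace).re) := by
  let X : Option V → Matrix (Fin n) (Fin n) ℂ := fun i => i.elim 1 P
  have hX : ∀ i, (X i).IsHermitian := fun i => i.rec isHermitian_one hherm
  suffices h : Q1Cert E p (of fun i j => re (ρ * X i * X j).trace) by
    convert h using 1
    ext (_ | u) (_ | v)
    · simp [X, hρtr]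
    · simp [X, hp]
    · simp [X, hp]
    · change (CFC.sqrt ρ * P u * P v * CFC.sqrt ρ).trace.re = re (ρ * P u * P v).trace
      rw [mul_assoc (CFC.sqrt ρ) (P u) (P v), trace_sqrt_mul_mul_sqrt hρ, ← mul_assoc]
      rfl
  refine ⟨hρ.posSemidef_re_trace_mul_mul hX, by simp [X, hρtr], fun v => by simp [X, hp],
    fun v => by simp [X, mul_assoc, hproj, hp], ?_, ?_⟩
  · intro e he u hu v hv huv
    have hPP := mul_eq_zero_of_sum_eq_one_of_isStarProjection
      (fun v => ⟨hproj v, hherm v⟩) (hsum e he) hu hv huv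
    simp [X, mul_assoc, hPP]
  · intro e he v
    simp only [of_apply, X, Option.elim]
    rw [← map_sum, ← trace_sum, ← Finset.sum_mul, ← Finset.mul_sum, hsum e he, mul_one, hp]
    rfl
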